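/- arXiv:2402.03787 — 4 statements merged into one kernel-verified Lean document; each statement's English description precedes it below -/
import Mathlib

section
/- Let n and k be positive integers and let s, t : Fin k → EuclideanSpace ℝ (Fin n). Then ⟪s i, s j⟫ = ⟪t i, t j⟫ for all i, j ∈ Fin k if and only if there exists g ∈ O(n) such that s i = g (t i) for all i. In other words, two k-tuples of vectors in ℝ^n have equal Gram matrices if and only if they are related by a single orthogonal transformation. -/
open RealInnerProductSpace

/-! Equal Gram matrices give `‖∑ cᵢ sᵢ‖ = ‖∑ cᵢ tᵢ‖` for all coefficients, so `∑ cᵢ tᵢ ↦ ∑ cᵢ sᵢ`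
is a well-defined linear isometry on the span of `t`; in finite dimension it extends to a linear
isometry of the whole space, which is then an isometric equivalence. -/

namespace LinearMap

variable {R M N P : Type*} [Ring R] [AddCommGroup M] [Module R M] [AddCommGroup N] [Module R N]
  [AddCommGroup P] [Module R P]

noncomputable def rangeLift (T : M →ₗ[R] N) (S : M →ₗ[R] P) (h : ker T ≤ ker S) :
    range T →ₗ[R] P :=
  (ker T).liftQ S h ∘ₗ T.quotKerEquivRange.symm.toLinearMap

theorem rangeLift_apply {T : M →ₗ[R] N} {S : M →ₗ[R] P} (h : ker T ≤ ker S) (m : M) :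
    rangeLift T S h ⟨T m, mem_range_self T m⟩ = S m := by
  simp [rangeLift, quotKerEquivRange_symm_apply_image]

end LinearMap

theorem Fintype.apply_mem_range_linearCombination {R ι M : Type*} [Semiring R] [Fintype ι]
    [AddCommMonoid M] [Module R M] (v : ι → M) (i : ι) :
    v i ∈ LinearMap.range (Fintype.linearCombination R v) := by
  rw [Fintype.range_linearCombination]
  exact Submodule.subset_span ⟨i, rfl⟩

section GramMatrix

open scoped InnerProductSpace

variable {𝕜 ι E F : Type*} [RCLike 𝕜] [Fintype ι]
  [NormedAddCommGroup E] [InnerProductSpace 𝕜 E] [NormedAddCommGroup F] [InnerProductSpace 𝕜 F]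
  {s : ι → F} {t : ι → E}

theorem inner_linearCombination_linearCombination (v : ι → E) (c d : ι → 𝕜) :
    ⟪Fintype.linearCombination 𝕜 v c, Fintype.linearCombination 𝕜 v d⟫_𝕜 =
      ∑ i, ∑ j, (starRingEnd 𝕜) (c i) * (d j * ⟪v i, v j⟫_𝕜) := by
  simp only [Fintype.linearCombination_apply, sum_inner, inner_smul_left]
  simp only [inner_sum, inner_smul_right, Finset.mul_sum]

theorem norm_linearCombination_eq_of_inner_eq (h : ∀ i j, ⟪s i, s j⟫_𝕜 = ⟪t i, t j⟫_𝕜)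
    (c : ι → 𝕜) :
    ‖Fintype.linearCombination 𝕜 s c‖ = ‖Fintype.linearCombination 𝕜 t c‖ := by
  rw [norm_eq_sqrt_re_inner (𝕜 := 𝕜), norm_eq_sqrt_re_inner (𝕜 := 𝕜),
    inner_linearCombination_linearCombination, inner_linearCombination_linearCombination]
  simp only [h]

theorem ker_linearCombination_le_of_inner_eq (h : ∀ i j, ⟪s i, s j⟫_𝕜 = ⟪t i, t j⟫_𝕜) :
    LinearMap.ker (Fintype.linearCombination 𝕜 t) ≤
      LinearMap.ker (Fintype.linearCombination 𝕜 s) := fun c hc => by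
  rw [LinearMap.mem_ker, ← norm_eq_zero, norm_linearCombination_eq_of_inner_eq h,
    LinearMap.mem_ker.mp hc, norm_zero]

noncomputable def LinearIsometry.ofInnerEq (h : ∀ i j, ⟪s i, s j⟫_𝕜 = ⟪t i, t j⟫_𝕜) :
    LinearMap.range (Fintype.linearCombination 𝕜 t) →ₗᵢ[𝕜] F where
  toLinearMap := LinearMap.rangeLift _ _ (ker_linearCombination_le_of_inner_eq h)
  norm_map' := by
    rintro ⟨_, c, rfl⟩
    rw [LinearMap.rangeLift_apply, norm_linearCombination_eq_of_inner_eq h]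
    rfl

theorem LinearIsometry.ofInnerEq_apply (h : ∀ i j, ⟪s i, s j⟫_𝕜 = ⟪t i, t j⟫_𝕜) (i : ι) :
    LinearIsometry.ofInnerEq h ⟨t i, Fintype.apply_mem_range_linearCombination t i⟩ = s i := by
  classical
  have hti : (⟨t i, Fintype.apply_mem_range_linearCombination t i⟩ :
      LinearMap.range (Fintype.linearCombination 𝕜 t)) =
      ⟨Fintype.linearCombination 𝕜 t (Pi.single i 1), LinearMap.mem_range_self _ _⟩ := by
    ext; simp
  rw [hti]
  exact (LinearMap.rangeLift_apply (T := Fintype.linearCombination 𝕜 t)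
    (S := Fintype.linearCombination 𝕜 s) _ _).trans (by simp)

theorem exists_linearIsometryEquiv_apply_eq_of_inner_eq [FiniteDimensional 𝕜 E]
    {s t : ι → E} (h : ∀ i j, ⟪s i, s j⟫_𝕜 = ⟪t i, t j⟫_𝕜) :
    ∃ g : E ≃ₗᵢ[𝕜] E, ∀ i, s i = g (t i) := by
  set L := LinearIsometry.ofInnerEq h
  refine ⟨L.extend.toLinearIsometryEquiv rfl, fun i => ?_⟩
  rw [LinearIsometry.toLinearIsometryEquiv_apply, ← LinearIsometry.ofInnerEq_apply h i]
  exact (L.extend_apply _).symm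

end GramMatrix

theorem gram_eq_iff_exists_orthogonal_general {n k : ℕ}
    (s t : Fin k → EuclideanSpace ℝ (Fin n)) :
    (∀ i j : Fin k, ⟪s i, s j⟫ = ⟪t i, t j⟫) ↔
      ∃ g : EuclideanSpace ℝ (Fin n) ≃ₗᵢ[ℝ] EuclideanSpace ℝ (Fin n),
        ∀ i : Fin k, s i = g (t i) := by
  refine ⟨exists_linearIsometryEquiv_apply_eq_of_inner_eq, ?_⟩
  rintro ⟨g, hg⟩ i j
  rw [hg i, hg j, g.inner_map_map]

/-- Two `k`-tuples of vectors in `ℝⁿ` have equal Gram matrices if and only if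
they are related by a single orthogonal transformation of `ℝⁿ`. -/
theorem gram_eq_iff_exists_orthogonal {n k : ℕ} (hn : 0 < n) (hk : 0 < k)
    (s t : Fin k → EuclideanSpace ℝ (Fin n)) :
    (∀ i j : Fin k, ⟪s i, s j⟫ = ⟪t i, t j⟫) ↔
      ∃ g : EuclideanSpace ℝ (Fin n) ≃ₗᵢ[ℝ] EuclideanSpace ℝ (Fin n),
        ∀ i : Fin k, s i = g (t i) :=
  gram_eq_iff_exists_orthogonal_general s t
end

section
/- Let t₁, t₂, s₁, s₂ ∈ EuclideanSpace ℝ (Fin n). There exists g ∈ O(n) with g t₁ = s₁ and g t₂ = s₂ if and only if ⟪s₁, s₁⟫ = ⟪t₁, t₁⟫, ⟪s₂, s₂⟫ = ⟪t₂, t₂⟫, and ⟪s₁, s₂⟫ = ⟪t₁, t₂⟫. That is, the O(n)-orbit of an ordered pair of points in ℝ^n is uniquely determined by the triple of their inner products. -/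
open RealInnerProductSpace

/-- The `O(n)`-orbit of an ordered pair of points in `ℝⁿ` is uniquely determined by the
triple of their inner products. -/
theorem exists_orthogonal_pair_iff_inner_triple {n : ℕ}
    (t₁ t₂ s₁ s₂ : EuclideanSpace ℝ (Fin n)) :
    (∃ g : EuclideanSpace ℝ (Fin n) ≃ₗᵢ[ℝ] EuclideanSpace ℝ (Fin n),
        g t₁ = s₁ ∧ g t₂ = s₂) ↔
      (⟪s₁, s₁⟫ = ⟪t₁, t₁⟫ ∧ ⟪s₂, s₂⟫ = ⟪t₂, t₂⟫ ∧ ⟪s₁, s₂⟫ = ⟪t₁, t₂⟫) := by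
  constructor
  · rintro ⟨g, rfl, rfl⟩
    exact ⟨g.inner_map_map t₁ t₁, g.inner_map_map t₂ t₂, g.inner_map_map t₁ t₂⟩
  · rintro ⟨h11, h22, h12⟩
    have h21 : ⟪s₂, s₁⟫ = ⟪t₂, t₁⟫ := by
      rw [real_inner_comm, h12, real_inner_comm]
    -- linear maps ℝ² → E
    let A : (ℝ × ℝ) →ₗ[ℝ] EuclideanSpace ℝ (Fin n) :=
      { toFun := fun c => c.1 • t₁ + c.2 • t₂
        map_add' := by intro a b; simp [add_smul]; abel
        map_smul' := by intro r a; simp [smul_smul, smul_add] }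
    let B : (ℝ × ℝ) →ₗ[ℝ] EuclideanSpace ℝ (Fin n) :=
      { toFun := fun c => c.1 • s₁ + c.2 • s₂
        map_add' := by intro a b; simp [add_smul]; abel
        map_smul' := by intro r a; simp [smul_smul, smul_add] }
    have hnorm : ∀ c : ℝ × ℝ, ‖B c‖ = ‖A c‖ := by
      intro c
      have hA : ⟪A c, A c⟫ = ⟪B c, B c⟫ := by
        simp only [A, B, LinearMap.coe_mk, AddHom.coe_mk, inner_add_add_self,
          real_inner_smul_left, real_inner_smul_right]
        rw [h11, h22, h12, h21]
      rw [@norm_eq_sqrt_re_inner ℝ, @norm_eq_sqrt_re_inner ℝ, hA]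
    have hker : LinearMap.ker A ≤ LinearMap.ker B := by
      intro c hc
      simp only [LinearMap.mem_ker] at hc ⊢
      have := hnorm c
      rw [hc, norm_zero] at this
      exact norm_eq_zero.mp this
    -- descend B through range A
    let φ : LinearMap.range A →ₗ[ℝ] EuclideanSpace ℝ (Fin n) :=
      (LinearMap.ker A).liftQ B hker ∘ₗ (A.quotKerEquivRange.symm : LinearMap.range A →ₗ[ℝ] _)
    have hφ : ∀ c : ℝ × ℝ, φ ⟨A c, LinearMap.mem_range_self A c⟩ = B c := by
      intro c
      have : A.quotKerEquivRange (Submodule.Quotient.mk c) = ⟨A c, LinearMap.mem_range_self A c⟩ :=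
        Subtype.ext (A.quotKerEquivRange_apply_mk c)
      simp only [φ, LinearMap.coe_comp, Function.comp_apply, LinearEquiv.coe_coe, ← this,
        LinearEquiv.symm_apply_apply, Submodule.liftQ_apply]
    have hφnorm : ∀ x : LinearMap.range A, ‖φ x‖ = ‖x‖ := by
      rintro ⟨x, c, rfl⟩
      rw [hφ c]
      exact (hnorm c).trans rfl
    let L : (LinearMap.range A) →ₗᵢ[ℝ] EuclideanSpace ℝ (Fin n) := ⟨φ, hφnorm⟩
    let g : EuclideanSpace ℝ (Fin n) ≃ₗᵢ[ℝ] EuclideanSpace ℝ (Fin n) := L.extend.toLinearIsometryEquiv rfl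
    have hg : ∀ c : ℝ × ℝ, g (A c) = B c := by
      intro c
      have := L.extend_apply ⟨A c, LinearMap.mem_range_self A c⟩
      simpa [g, hφ c, L] using this
    refine ⟨g, ?_, ?_⟩
    · have := hg (1, 0); simpa [A, B] using this
    · have := hg (0, 1); simpa [A, B] using this
end

section
/- Let k ≥ 3 and let t : Fin k → EuclideanSpace ℝ (Fin n) be a tuple of pairwise distinct points that is collision-free. Let z₁, …, z_q be the distinct values among ‖t 1‖, …, ‖t k‖ and, for p = 1, …, q, let r_p be the number of indices i with ‖t i‖ = z_p (so r₁ + ⋯ + r_q = k). Let S be the set of all tuples s : Fin k → EuclideanSpace ℝ (Fin n) of pairwise distinct points having the same second-moment data as t. Then the number of equivalence classes of S under the equivalence relation 's ≈ s' iff there exist g ∈ O(n) and a permutation σ of Fin k with s i = g (s' (σ i)) for all i' is at most (∏_{p : r_p ≥ 2} (r_p choose 2)!) · (∏_{1 ≤ a < b ≤ q} (r_a · r_b)!) / (∏_{p=1}^{q} r_p!), where this bound is read as a rational number. -/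
open RealInnerProductSpace
open scoped BigOperators Classical

/-- Collision-free tuples. -/
def IsCollisionFree {n k : ℕ} (t : Fin k → EuclideanSpace ℝ (Fin n)) : Prop :=
  ∀ i j l m : Fin k, i ≠ j → l ≠ m →
    (∃ g : EuclideanSpace ℝ (Fin n) ≃ₗᵢ[ℝ] EuclideanSpace ℝ (Fin n),
        ({g (t i), g (t j)} : Set (EuclideanSpace ℝ (Fin n))) = {t l, t m}) →
    ({t i, t j} : Set (EuclideanSpace ℝ (Fin n))) = {t l, t m}

/-- Pair data. -/
def pairData {n k : ℕ} (s : Fin k → EuclideanSpace ℝ (Fin n)) : Set (Sym2 ℝ × ℝ) :=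
  { p | ∃ i j : Fin k, i < j ∧ p = (s(‖s i‖, ‖s j‖), ⟪s i, s j⟫) }

/-- Norm data. -/
noncomputable def normData {n k : ℕ} (s : Fin k → EuclideanSpace ℝ (Fin n)) : Multiset ℝ :=
  Finset.univ.val.map fun i => ‖s i‖

/-- Same second-moment data. -/
def SameSecondMoment {n k : ℕ} (s t : Fin k → EuclideanSpace ℝ (Fin n)) : Prop :=
  normData s = normData t ∧ pairData s = pairData t

/-- `s ≈ s'` iff there exist `g ∈ O(n)` and a permutation `σ` of `Fin k`
with `s i = g (s' (σ i))` for all `i`. -/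
def EquivRel {n k : ℕ} (S : Set (Fin k → EuclideanSpace ℝ (Fin n))) (s s' : S) : Prop :=
  ∃ (g : EuclideanSpace ℝ (Fin n) ≃ₗᵢ[ℝ] EuclideanSpace ℝ (Fin n))
    (σ : Equiv.Perm (Fin k)),
    ∀ i : Fin k, (s : Fin k → EuclideanSpace ℝ (Fin n)) i
      = g ((s' : Fin k → EuclideanSpace ℝ (Fin n)) (σ i))

/-- The finite set `{z₁, …, z_q}` of distinct magnitudes among `‖t 1‖, …, ‖t k‖`. -/
noncomputable def norms {n k : ℕ} (t : Fin k → EuclideanSpace ℝ (Fin n)) : Finset ℝ :=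
  Finset.univ.image fun i => ‖t i‖

/-- The number `r_p` of indices `i` with `‖t i‖ = z`. -/
noncomputable def mult {n k : ℕ} (t : Fin k → EuclideanSpace ℝ (Fin n)) (z : ℝ) : ℕ :=
  (Finset.univ.filter fun i => ‖t i‖ = z).card

/-- The bound `(∏_{p : r_p ≥ 2} (r_p choose 2)!) · (∏_{a < b ≤ q} (r_a r_b)!) / (∏_p r_p!)`,
read as a rational number. -/
noncomputable def classBound {n k : ℕ} (t : Fin k → EuclideanSpace ℝ (Fin n)) : ℚ :=
  ((∏ z ∈ (norms t).filter (fun z => 2 ≤ mult t z),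
      (((mult t z).choose 2).factorial : ℚ)) *
    ∏ p ∈ ((norms t) ×ˢ (norms t)).filter (fun p => p.1 < p.2),
      ((mult t p.1 * mult t p.2).factorial : ℚ)) /
  ∏ z ∈ norms t, ((mult t z).factorial : ℚ)

local notation "Euc" n => EuclideanSpace ℝ (Fin n)

lemma exists_isometry_of_inner_eq {n m : ℕ} {u v : Fin m → Euc n}
    (h : ∀ i j, ⟪u i, u j⟫ = ⟪v i, v j⟫) :
    ∃ g : (Euc n) ≃ₗᵢ[ℝ] (Euc n), ∀ i, g (u i) = v i := by
  classical
  set T : (Fin m → ℝ) →ₗ[ℝ] Euc n := Fintype.linearCombination ℝ u with hT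
  set T' : (Fin m → ℝ) →ₗ[ℝ] Euc n := Fintype.linearCombination ℝ v with hT'
  have hTa : ∀ x, T x = ∑ i, x i • u i := fun x => rfl
  have hTa' : ∀ x, T' x = ∑ i, x i • v i := fun x => rfl
  have hinner : ∀ x y, ⟪T x, T y⟫ = ⟪T' x, T' y⟫ := by
    intro x y
    rw [hTa, hTa, hTa', hTa']
    rw [sum_inner, sum_inner]
    refine Finset.sum_congr rfl fun i _ => ?_
    rw [inner_sum, inner_sum]
    refine Finset.sum_congr rfl fun j _ => ?_
    rw [real_inner_smul_left, real_inner_smul_left, real_inner_smul_right,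
      real_inner_smul_right, h]
  have hker : LinearMap.ker T ≤ LinearMap.ker T' := by
    intro x hx
    rw [LinearMap.mem_ker] at hx ⊢
    have : ⟪T' x, T' x⟫ = 0 := by rw [← hinner, hx, inner_zero_right]
    exact inner_self_eq_zero.mp this
  set L0 : ((Fin m → ℝ) ⧸ LinearMap.ker T) →ₗ[ℝ] Euc n := (LinearMap.ker T).liftQ T' hker
  set L : (LinearMap.range T) →ₗ[ℝ] Euc n := L0 ∘ₗ T.quotKerEquivRange.symm.toLinearMap
  have hL : ∀ x : Fin m → ℝ, L ⟨T x, LinearMap.mem_range_self T x⟩ = T' x := by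
    intro x
    have h1 : T.quotKerEquivRange.symm ⟨T x, LinearMap.mem_range_self T x⟩
        = Submodule.Quotient.mk x := T.quotKerEquivRange_symm_apply_image x _
    simp only [L, LinearMap.comp_apply, LinearEquiv.coe_coe, h1]
    exact Submodule.liftQ_apply _ _ _
  have hnorm : ∀ y : LinearMap.range T, ‖L y‖ = ‖y‖ := by
    rintro ⟨y, hy⟩
    obtain ⟨x, rfl⟩ := hy
    rw [hL]
    have h2 : ⟪T' x, T' x⟫ = ⟪T x, T x⟫ := (hinner x x).symm
    rw [real_inner_self_eq_norm_sq, real_inner_self_eq_norm_sq] at h2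
    have h3 := congrArg Real.sqrt h2
    simpa [Real.sqrt_sq (norm_nonneg _)] using h3
  set L' : (LinearMap.range T) →ₗᵢ[ℝ] Euc n := ⟨L, hnorm⟩
  set g0 : (Euc n) →ₗᵢ[ℝ] (Euc n) := L'.extend
  set g : (Euc n) ≃ₗᵢ[ℝ] (Euc n) := g0.toLinearIsometryEquiv rfl
  refine ⟨g, fun i => ?_⟩
  have hu : u i = T (Pi.single i 1) := by
    rw [hTa]; simp [Pi.single_apply, ite_smul]
  have hv : v i = T' (Pi.single i 1) := by
    rw [hTa']; simp [Pi.single_apply, ite_smul]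
  have hg : g (u i) = g0 (u i) := g0.toLinearIsometryEquiv_apply rfl (u i)
  rw [hg]
  have hmem : u i ∈ LinearMap.range T := ⟨Pi.single i 1, hu.symm⟩
  have he : g0 (u i) = L' ⟨u i, hmem⟩ := L'.extend_apply ⟨u i, hmem⟩
  rw [he]
  have : L' ⟨u i, hmem⟩ = L ⟨u i, hmem⟩ := rfl
  rw [this]
  have : (⟨u i, hmem⟩ : LinearMap.range T) = ⟨T (Pi.single i 1), LinearMap.mem_range_self T _⟩ := by
    exact Subtype.ext hu
  rw [this, hL, ← hv]

noncomputable def datum {n k : ℕ} (s : Fin k → Euc n) (i j : Fin k) : Sym2 ℝ × ℝ :=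
  (s(‖s i‖, ‖s j‖), ⟪s i, s j⟫)

lemma datum_comm {n k : ℕ} (s : Fin k → Euc n) (i j : Fin k) :
    datum s i j = datum s j i := by
  unfold datum
  rw [Sym2.eq_swap, real_inner_comm]

lemma mem_pairData {n k : ℕ} (s : Fin k → Euc n) (x : Sym2 ℝ × ℝ) :
    x ∈ pairData s ↔ ∃ i j, i ≠ j ∧ x = datum s i j := by
  constructor
  · rintro ⟨i, j, hij, rfl⟩
    exact ⟨i, j, ne_of_lt hij, rfl⟩
  · rintro ⟨i, j, hij, rfl⟩
    rcases lt_or_gt_of_ne hij with h | h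
    · exact ⟨i, j, h, rfl⟩
    · exact ⟨j, i, h, (datum_comm s i j ▸ rfl : datum s i j = datum s j i)⟩

lemma pairData_comp {n k : ℕ} (s : Fin k → Euc n) (τ : Equiv.Perm (Fin k)) :
    pairData (s ∘ τ) = pairData s := by
  ext x
  rw [mem_pairData, mem_pairData]
  constructor
  · rintro ⟨i, j, hij, rfl⟩
    exact ⟨τ i, τ j, fun h => hij (τ.injective h), rfl⟩
  · rintro ⟨i, j, hij, rfl⟩
    refine ⟨τ.symm i, τ.symm j, fun h => hij (τ.symm.injective h), ?_⟩
    show datum s i j = datum s (τ (τ.symm i)) (τ (τ.symm j))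
    rw [Equiv.apply_symm_apply, Equiv.apply_symm_apply]

lemma exists_isometry_pair {n : ℕ} {a b c d : Euc n}
    (h1 : s(‖a‖, ‖b‖) = s(‖c‖, ‖d‖)) (h2 : ⟪a, b⟫ = ⟪c, d⟫) :
    ∃ g : (Euc n) ≃ₗᵢ[ℝ] (Euc n), ({g a, g b} : Set (Euc n)) = {c, d} := by
  rw [Sym2.eq_iff] at h1
  have self_eq : ∀ (x y : Euc n), ‖x‖ = ‖y‖ → ⟪x,x⟫ = ⟪y,y⟫ := by
    intro x y h
    rw [real_inner_self_eq_norm_sq, real_inner_self_eq_norm_sq, h]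
  rcases h1 with ⟨hac, hbd⟩ | ⟨had, hbc⟩
  · have hyp : ∀ i j : Fin 2, ⟪(![a, b]) i, (![a, b]) j⟫ = ⟪(![c, d]) i, (![c, d]) j⟫ := by
      intro i j
      fin_cases i <;> fin_cases j
      exacts [self_eq a c hac, h2, (real_inner_comm a b).trans (h2.trans (real_inner_comm c d).symm),
        self_eq b d hbd]
    obtain ⟨g, hg⟩ := exists_isometry_of_inner_eq hyp
    refine ⟨g, ?_⟩
    have h0 := hg 0
    have h1 := hg 1
    simp only [Matrix.cons_val_zero, Matrix.cons_val_one, Matrix.head_cons] at h0 h1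
    rw [h0, h1]
  · have hyp : ∀ i j : Fin 2, ⟪(![a, b]) i, (![a, b]) j⟫ = ⟪(![d, c]) i, (![d, c]) j⟫ := by
      intro i j
      fin_cases i <;> fin_cases j
      exacts [self_eq a d had, h2.trans (real_inner_comm c d).symm, (real_inner_comm a b).trans h2,
        self_eq b c hbc]
    obtain ⟨g, hg⟩ := exists_isometry_of_inner_eq hyp
    refine ⟨g, ?_⟩
    have h0 := hg 0
    have h1 := hg 1
    simp only [Matrix.cons_val_zero, Matrix.cons_val_one, Matrix.head_cons] at h0 h1
    rw [h0, h1, Set.pair_comm]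

/-- The type of ordered pairs `i < j`. -/
abbrev PairT (k : ℕ) := {p : Fin k × Fin k // p.1 < p.2}

noncomputable def dmap {n k : ℕ} (s : Fin k → Euc n) (p : PairT k) : Sym2 ℝ × ℝ :=
  datum s p.1.1 p.1.2

lemma range_dmap {n k : ℕ} (s : Fin k → Euc n) : Set.range (dmap s) = pairData s := by
  ext x
  constructor
  · rintro ⟨⟨⟨i, j⟩, hij⟩, rfl⟩
    exact ⟨i, j, hij, rfl⟩
  · rintro ⟨i, j, hij, rfl⟩
    exact ⟨⟨⟨i, j⟩, hij⟩, rfl⟩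

lemma dmap_injective {n k : ℕ} {t : Fin k → Euc n} (hinj : Function.Injective t)
    (hcf : ∀ i j l m : Fin k, i ≠ j → l ≠ m →
      (∃ g : (Euc n) ≃ₗᵢ[ℝ] (Euc n), ({g (t i), g (t j)} : Set (Euc n)) = {t l, t m}) →
      ({t i, t j} : Set (Euc n)) = {t l, t m}) :
    Function.Injective (dmap t) := by
  rintro ⟨⟨i, j⟩, hij⟩ ⟨⟨l, m⟩, hlm⟩ h
  have h1 : s(‖t i‖, ‖t j‖) = s(‖t l‖, ‖t m‖) := congrArg Prod.fst h
  have h2 : ⟪t i, t j⟫ = ⟪t l, t m⟫ := congrArg Prod.snd h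
  obtain ⟨g, hg⟩ := exists_isometry_pair h1 h2
  have hset := hcf i j l m (ne_of_lt hij) (ne_of_lt hlm) ⟨g, hg⟩
  rw [Set.pair_eq_pair_iff] at hset
  rcases hset with ⟨hil, hjm⟩ | ⟨him, hjl⟩
  · exact Subtype.ext (Prod.ext (hinj hil) (hinj hjm))
  · exact absurd (hij.trans ((hinj hjl) ▸ hlm)) (by rw [hinj him]; exact lt_irrefl m |>.elim ∘ id)

lemma exists_perm_norm_eq {n k : ℕ} {s t : Fin k → Euc n}
    (h : (Finset.univ.val.map fun i => ‖s i‖) = Finset.univ.val.map fun i => ‖t i‖) :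
    ∃ τ : Equiv.Perm (Fin k), ∀ i, ‖s (τ i)‖ = ‖t i‖ := by
  classical
  have hcount : ∀ a : ℝ, Fintype.card {i // ‖t i‖ = a} = Fintype.card {i // ‖s i‖ = a} := by
    intro a
    have hc := congrArg (Multiset.count a) h
    rw [Multiset.count_map, Multiset.count_map] at hc
    simp only [Fintype.card_subtype]
    rw [Finset.card_def, Finset.card_def, Finset.filter_val, Finset.filter_val]
    rw [Multiset.filter_congr (fun x _ => (eq_comm : ‖t x‖ = a ↔ a = ‖t x‖)),
      Multiset.filter_congr (fun x _ => (eq_comm : ‖s x‖ = a ↔ a = ‖s x‖))]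
    exact hc.symm
  let e : ∀ a, {i // ‖t i‖ = a} ≃ {i // ‖s i‖ = a} := fun a => Fintype.equivOfCardEq (hcount a)
  exact ⟨Equiv.ofFiberEquiv e, fun i => Equiv.ofFiberEquiv_map e i⟩

noncomputable def pmap {k : ℕ} (σ : Equiv.Perm (Fin k)) (p : PairT k) : PairT k :=
  if h : σ p.1.1 < σ p.1.2 then ⟨(σ p.1.1, σ p.1.2), h⟩
  else ⟨(σ p.1.2, σ p.1.1), lt_of_le_of_ne (not_lt.mp h)
    (fun e => (ne_of_lt p.2) (σ.injective e.symm))⟩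

lemma pmap_left_inv {k : ℕ} (σ : Equiv.Perm (Fin k)) (p : PairT k) :
    pmap σ⁻¹ (pmap σ p) = p := by
  obtain ⟨⟨i, j⟩, hij⟩ := p
  unfold pmap
  by_cases h : σ i < σ j
  · simp only [h, dite_true, Equiv.Perm.coe_inv, Equiv.symm_apply_apply]
    rw [dif_pos hij]
  · simp only [h, dite_false, Equiv.Perm.coe_inv, Equiv.symm_apply_apply]
    rw [dif_neg (asymm hij)]

noncomputable def pmape {k : ℕ} (σ : Equiv.Perm (Fin k)) : Equiv.Perm (PairT k) where
  toFun := pmap σ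
  invFun := pmap σ⁻¹
  left_inv := pmap_left_inv σ
  right_inv := fun p => by
    have := pmap_left_inv σ⁻¹ p
    rwa [inv_inv] at this

lemma pmap_cases {k : ℕ} (σ : Equiv.Perm (Fin k)) (p : PairT k) :
    (pmap σ p).1 = (σ p.1.1, σ p.1.2) ∨ (pmap σ p).1 = (σ p.1.2, σ p.1.1) := by
  unfold pmap
  split
  · exact Or.inl rfl
  · exact Or.inr rfl

lemma dmap_pmap {n k : ℕ} (u : Fin k → Euc n) (σ : Equiv.Perm (Fin k)) (p : PairT k) :
    dmap u (pmap σ p) = dmap (u ∘ σ) p := by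
  unfold pmap dmap
  split
  · rfl
  · exact datum_comm u _ _

/-- A permutation fixing all unordered pairs of a type with ≥ 3 elements is the identity. -/
lemma perm_eq_of_fix_pairs {k : ℕ} (hk : 3 ≤ k) {ρ : Equiv.Perm (Fin k)}
    (h : ∀ i j : Fin k, i ≠ j → ρ i = i ∨ ρ i = j) : ρ = 1 := by
  refine Equiv.ext fun i => ?_
  show ρ i = i
  have hcard : 1 < (({i} : Finset (Fin k))ᶜ).card := by
    rw [Finset.card_compl, Finset.card_singleton, Fintype.card_fin]
    omega
  obtain ⟨a, ha, b, hb, hab⟩ := Finset.one_lt_card.mp hcard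
  rw [Finset.mem_compl, Finset.mem_singleton] at ha hb
  rcases h i a (Ne.symm ha) with h1 | h1
  · exact h1
  · rcases h i b (Ne.symm hb) with h2 | h2
    · exact h2
    · exact absurd (h1.symm.trans h2) hab

lemma perm_eq_of_pmap_eq {k : ℕ} (hk : 3 ≤ k) {σ σ' : Equiv.Perm (Fin k)}
    (h : ∀ p : PairT k, pmap σ p = pmap σ' p) : σ = σ' := by
  have conv' : ∀ x y : Fin k, σ x = σ' y → σ'⁻¹ (σ x) = y := fun x y e => by
    rw [e, Equiv.Perm.coe_inv, Equiv.symm_apply_apply]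
  have key : ∀ i j : Fin k, i ≠ j → σ'⁻¹ (σ i) = i ∨ σ'⁻¹ (σ i) = j := by
    intro i j hij
    rcases lt_or_gt_of_ne hij with hlt | hlt
    · set p : PairT k := ⟨(i, j), hlt⟩ with hpdef
      have hpe : (pmap σ p).1 = (pmap σ' p).1 := congrArg _ (h p)
      rcases pmap_cases σ p with hc | hc <;> rcases pmap_cases σ' p with hc' | hc' <;>
        · have e := hc.symm.trans (hpe.trans hc')
          simp only [Prod.mk.injEq] at e
          obtain ⟨e1, e2⟩ := e
          first
            | exact Or.inl (conv' _ _ e1) | exact Or.inl (conv' _ _ e2)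
            | exact Or.inr (conv' _ _ e1) | exact Or.inr (conv' _ _ e2)
    · set p : PairT k := ⟨(j, i), hlt⟩ with hpdef
      have hpe : (pmap σ p).1 = (pmap σ' p).1 := congrArg _ (h p)
      rcases pmap_cases σ p with hc | hc <;> rcases pmap_cases σ' p with hc' | hc' <;>
        · have e := hc.symm.trans (hpe.trans hc')
          simp only [Prod.mk.injEq] at e
          obtain ⟨e1, e2⟩ := e
          first
            | exact Or.inl (conv' _ _ e1) | exact Or.inl (conv' _ _ e2)
            | exact Or.inr (conv' _ _ e1) | exact Or.inr (conv' _ _ e2)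
  have : σ'⁻¹ * σ = 1 := by
    apply perm_eq_of_fix_pairs hk
    intro i j hij
    exact key i j hij
  calc σ = σ' * (σ'⁻¹ * σ) := by group
  _ = σ' * 1 := by rw [this]
  _ = σ' := mul_one σ'

noncomputable def dnu {n k : ℕ} (t : Fin k → Euc n) (p : PairT k) : Sym2 ℝ :=
  s(‖t p.1.1‖, ‖t p.1.2‖)

lemma dnu_pmap {n k : ℕ} {t : Fin k → Euc n} {σ : Equiv.Perm (Fin k)}
    (hσ : ∀ i, ‖t (σ i)‖ = ‖t i‖) (p : PairT k) : dnu t (pmap σ p) = dnu t p := by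
  unfold pmap dnu
  split
  · simp only [hσ]
  · rw [Sym2.eq_swap]
    simp only [hσ]

lemma exists_psi {n k : ℕ} {t s : Fin k → Euc n}
    (hdmt : Function.Injective (dmap t))
    (hnd : (Finset.univ.val.map fun i => ‖s i‖) = Finset.univ.val.map fun i => ‖t i‖)
    (hpd : pairData s = pairData t) :
    ∃ (τ : Equiv.Perm (Fin k)) (ψ : Equiv.Perm (PairT k)),
      (∀ i, ‖s (τ i)‖ = ‖t i‖) ∧ (∀ p, dmap t (ψ p) = dmap (s ∘ τ) p) ∧
      (∀ p, dnu t (ψ p) = dnu t p) := by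
  classical
  obtain ⟨τ, hτ⟩ := exists_perm_norm_eq hnd
  have hrange : Set.range (dmap (s ∘ τ)) = Set.range (dmap t) := by
    rw [range_dmap, range_dmap, pairData_comp, hpd]
  have hex : ∀ p, ∃ q, dmap t q = dmap (s ∘ τ) p := by
    intro p
    have hm : dmap (s ∘ τ) p ∈ Set.range (dmap t) := by
      rw [← hrange]; exact Set.mem_range_self p
    exact hm
  choose ψf hψf using hex
  have hsurj : Function.Surjective ψf := by
    intro q
    have hmem : dmap t q ∈ Set.range (dmap (s ∘ τ)) := hrange.symm ▸ Set.mem_range_self q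
    obtain ⟨p, hp⟩ := hmem
    exact ⟨p, hdmt ((hψf p).trans hp)⟩
  have hbij : Function.Bijective ψf := ⟨Finite.injective_iff_surjective.mpr hsurj, hsurj⟩
  refine ⟨τ, Equiv.ofBijective ψf hbij, hτ, fun p => hψf p, fun p => ?_⟩
  have h1 : dnu t (ψf p) = dnu (s ∘ τ) p := congrArg Prod.fst (hψf p)
  have h2 : dnu (s ∘ τ) p = dnu t p := by
    unfold dnu
    simp only [Function.comp_apply, hτ]
  exact h1.trans h2

lemma equiv_of_psi_eq {n k : ℕ} {t s s' : Fin k → Euc n}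
    (τ τ' : Equiv.Perm (Fin k)) (ψ ψ' : Equiv.Perm (PairT k)) (σ σ' : Equiv.Perm (Fin k))
    (hτ : ∀ i, ‖s (τ i)‖ = ‖t i‖) (hτ' : ∀ i, ‖s' (τ' i)‖ = ‖t i‖)
    (hψ : ∀ p, dmap t (ψ p) = dmap (s ∘ τ) p) (hψ' : ∀ p, dmap t (ψ' p) = dmap (s' ∘ τ') p)
    (hσ : ∀ i, ‖t (σ i)‖ = ‖t i‖) (hσ' : ∀ i, ‖t (σ' i)‖ = ‖t i‖)
    (heq : ∀ p, ψ (pmap σ p) = ψ' (pmap σ' p)) :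
    ∃ (g : (Euc n) ≃ₗᵢ[ℝ] (Euc n)) (μ : Equiv.Perm (Fin k)), ∀ i, s' i = g (s (μ i)) := by
  set u : Fin k → Euc n := (s ∘ τ) ∘ σ with hu
  set v : Fin k → Euc n := (s' ∘ τ') ∘ σ' with hv
  have hd : ∀ p, dmap u p = dmap v p := by
    intro p
    rw [← dmap_pmap (s ∘ τ) σ p, ← dmap_pmap (s' ∘ τ') σ' p, ← hψ, ← hψ', heq]
  have hun : ∀ i, ‖u i‖ = ‖t i‖ := fun i => (hτ (σ i)).trans (hσ i)
  have hvn : ∀ i, ‖v i‖ = ‖t i‖ := fun i => (hτ' (σ' i)).trans (hσ' i)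
  have hin : ∀ i j, ⟪u i, u j⟫ = ⟪v i, v j⟫ := by
    intro i j
    rcases lt_trichotomy i j with hlt | heqq | hgt
    · exact congrArg Prod.snd (hd ⟨(i, j), hlt⟩)
    · subst heqq
      rw [real_inner_self_eq_norm_sq, real_inner_self_eq_norm_sq, hun, hvn]
    · have h2 : ⟪u j, u i⟫ = ⟪v j, v i⟫ := congrArg Prod.snd (hd ⟨(j, i), hgt⟩)
      exact (real_inner_comm (u j) (u i)).trans (h2.trans (real_inner_comm (v i) (v j)))
  obtain ⟨g, hg⟩ := exists_isometry_of_inner_eq hin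
  refine ⟨g, τ'.symm.trans (σ'.symm.trans (σ.trans τ)), fun j => ?_⟩
  have := hg (σ'.symm (τ'.symm j))
  simp only [hu, hv, Function.comp_apply, Equiv.apply_symm_apply] at this
  exact this.symm

lemma finite_and_card_mul_le {n k : ℕ} (hk : 3 ≤ k) (t : Fin k → Euc n)
    (hinj : Function.Injective t) (hcf : IsCollisionFree t) :
    Finite (Quot (EquivRel {s : Fin k → EuclideanSpace ℝ (Fin n) |
      Function.Injective s ∧ SameSecondMoment s t})) ∧
    Nat.card (Quot (EquivRel {s : Fin k → EuclideanSpace ℝ (Fin n) |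
        Function.Injective s ∧ SameSecondMoment s t})) *
      Fintype.card {σ : Equiv.Perm (Fin k) // (fun i => ‖t i‖) ∘ σ = fun i => ‖t i‖} ≤
      Fintype.card {g : Equiv.Perm (PairT k) // dnu t ∘ g = dnu t} := by
  classical
  set S : Set (Fin k → Euc n) := {s | Function.Injective s ∧ SameSecondMoment s t} with hS
  have hdmt : Function.Injective (dmap t) := dmap_injective hinj hcf
  have hpsi : ∀ c : Quot (EquivRel S), ∃ (τ : Equiv.Perm (Fin k)) (ψ : Equiv.Perm (PairT k)),
      (∀ i, ‖(c.out : Fin k → Euc n) (τ i)‖ = ‖t i‖) ∧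
      (∀ p, dmap t (ψ p) = dmap ((c.out : Fin k → Euc n) ∘ τ) p) ∧
      (∀ p, dnu t (ψ p) = dnu t p) := by
    intro c
    obtain ⟨hi, hnd, hpd⟩ := c.out.2
    exact exists_psi hdmt hnd hpd
  choose τc ψc hτc hψc hνc using hpsi
  set H := {σ : Equiv.Perm (Fin k) // (fun i => ‖t i‖) ∘ σ = fun i => ‖t i‖} with hH
  set GG := {g : Equiv.Perm (PairT k) // dnu t ∘ g = dnu t} with hGG
  have hHn : ∀ σ : H, ∀ i, ‖t (σ.1 i)‖ = ‖t i‖ := fun σ i => congrFun σ.2 i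
  have Fprop : ∀ (c : Quot (EquivRel S)) (σ : H),
      dnu t ∘ ((pmape σ.1).trans (ψc c)) = dnu t := by
    intro c σ
    funext p
    exact (hνc c (pmap σ.1 p)).trans (dnu_pmap (hHn σ) p)
  set F : Quot (EquivRel S) × H → GG :=
    fun x => ⟨(pmape x.2.1).trans (ψc x.1), Fprop x.1 x.2⟩ with hF
  have hFinj : Function.Injective F := by
    rintro ⟨c, σ⟩ ⟨c', σ'⟩ hFeq
    have heq : ∀ p, ψc c (pmap σ.1 p) = ψc c' (pmap σ'.1 p) := by
      intro p
      exact congrArg (fun x : GG => x.1 p) hFeq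
    obtain ⟨g, μ, hgμ⟩ := equiv_of_psi_eq (τc c) (τc c') (ψc c) (ψc c') σ.1 σ'.1
      (hτc c) (hτc c') (hψc c) (hψc c') (hHn σ) (hHn σ') heq
    have hrel : EquivRel S c'.out c.out := ⟨g, μ, fun i => hgμ i⟩
    have hcc : c' = c := by
      rw [← Quot.out_eq c', ← Quot.out_eq c]
      exact Quot.sound hrel
    subst hcc
    have hpm : ∀ p, pmap σ.1 p = pmap σ'.1 p := fun p => (ψc c').injective (heq p)
    have hσσ : σ.1 = σ'.1 := perm_eq_of_pmap_eq hk hpm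
    rw [Prod.mk.injEq]
    exact ⟨rfl, Subtype.ext hσσ⟩
  have hone : (fun i => ‖t i‖) ∘ (1 : Equiv.Perm (Fin k)) = fun i => ‖t i‖ := rfl
  have hfin : Finite (Quot (EquivRel S)) :=
    Finite.of_injective (fun c => F (c, ⟨1, hone⟩))
      (fun c c' h => (Prod.mk.injEq _ _ _ _ ▸ hFinj h).1)
  refine ⟨hfin, ?_⟩
  have h2 : Nat.card H = Fintype.card H := Nat.card_eq_fintype_card
  have h1 : Nat.card (Quot (EquivRel S)) * Fintype.card H = Nat.card (Quot (EquivRel S) × H) := by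
    rw [Nat.card_prod, h2]
  rw [h1, ← Nat.card_eq_fintype_card]
  exact Nat.card_le_card_of_injective F hFinj

lemma card_lt_filter {k : ℕ} (A : Finset (Fin k)) :
    ((A ×ˢ A).filter fun q => q.1 < q.2).card = A.card.choose 2 := by
  classical
  set L := (A ×ˢ A).filter fun q => q.1 < q.2 with hL
  set G := (A ×ˢ A).filter fun q => q.2 < q.1 with hG
  have hGL : G = L.image Prod.swap := by
    ext q
    simp only [hG, hL, Finset.mem_image, Finset.mem_filter, Finset.mem_product]
    constructor
    · rintro ⟨⟨h1, h2⟩, h3⟩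
      exact ⟨q.swap, ⟨⟨h2, h1⟩, h3⟩, Prod.swap_swap q⟩
    · rintro ⟨p, ⟨⟨h1, h2⟩, h3⟩, rfl⟩
      exact ⟨⟨h2, h1⟩, h3⟩
  have hLG : G.card = L.card := by
    rw [hGL, Finset.card_image_of_injective _ Prod.swap_injective]
  have e1 : A.offDiag.filter (fun q => q.1 < q.2) = L := by
    ext q
    simp only [hL, Finset.mem_filter, Finset.mem_offDiag, Finset.mem_product]
    constructor
    · rintro ⟨⟨h1, h2, _⟩, h4⟩
      exact ⟨⟨h1, h2⟩, h4⟩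
    · rintro ⟨⟨h1, h2⟩, h4⟩
      exact ⟨⟨h1, h2, ne_of_lt h4⟩, h4⟩
  have e2 : A.offDiag.filter (fun q => ¬ q.1 < q.2) = G := by
    ext q
    simp only [hG, Finset.mem_filter, Finset.mem_offDiag, Finset.mem_product]
    constructor
    · rintro ⟨⟨h1, h2, h3⟩, h4⟩
      exact ⟨⟨h1, h2⟩, lt_of_le_of_ne (not_lt.mp h4) (Ne.symm h3)⟩
    · rintro ⟨⟨h1, h2⟩, h4⟩
      exact ⟨⟨h1, h2, ne_of_gt h4⟩, not_lt.mpr (le_of_lt h4)⟩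
  have hsum : L.card + G.card = A.offDiag.card := by
    rw [← e1, ← e2]
    exact Finset.card_filter_add_card_filter_not _
  rw [hLG] at hsum
  have hoff : A.offDiag.card = A.card * A.card - A.card := by
    simp only [Finset.offDiag_card]
  have hmul : ∀ r : ℕ, r * r - r = r * (r - 1) := by
    intro r
    cases r with
    | zero => simp
    | succ m =>
      have h1 : (m + 1) * (m + 1) = (m + 1) * m + (m + 1) := by ring
      have h2 : (m + 1) - 1 = m := rfl
      rw [h2, h1]
      omega
  have hm := hmul A.card
  rw [Nat.choose_two_right]
  omega

lemma fiber_diag {n k : ℕ} (t : Fin k → Euc n) (z : ℝ) :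
    Fintype.card {p : PairT k // dnu t p = s(z, z)} = (mult t z).choose 2 := by
  classical
  have hch : ∀ p : PairT k, (dnu t p = s(z, z)) ↔ (‖t p.1.1‖ = z ∧ ‖t p.1.2‖ = z) := by
    intro p
    unfold dnu
    rw [Sym2.eq_iff]
    tauto
  have e1 : {p : PairT k // dnu t p = s(z, z)} ≃
      {p : PairT k // ‖t p.1.1‖ = z ∧ ‖t p.1.2‖ = z} := Equiv.subtypeEquivRight hch
  have e2 : {p : PairT k // ‖t p.1.1‖ = z ∧ ‖t p.1.2‖ = z} ≃
      {q : Fin k × Fin k // q.1 < q.2 ∧ (‖t q.1‖ = z ∧ ‖t q.2‖ = z)} :=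
    Equiv.subtypeSubtypeEquivSubtypeInter (fun q : Fin k × Fin k => q.1 < q.2)
      (fun q => ‖t q.1‖ = z ∧ ‖t q.2‖ = z)
  rw [Fintype.card_congr (e1.trans e2), Fintype.card_subtype]
  have hfe : Finset.univ.filter (fun q : Fin k × Fin k => q.1 < q.2 ∧ (‖t q.1‖ = z ∧ ‖t q.2‖ = z))
      = ((Finset.univ.filter fun i => ‖t i‖ = z) ×ˢ (Finset.univ.filter fun i => ‖t i‖ = z)).filter
        (fun q => q.1 < q.2) := by
    ext q
    simp only [Finset.mem_filter, Finset.mem_product, Finset.mem_univ, true_and]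
    tauto
  rw [hfe, card_lt_filter]
  rfl

lemma fiber_offdiag {n k : ℕ} (t : Fin k → Euc n) (a b : ℝ) (hab : a ≠ b) :
    Fintype.card {p : PairT k // dnu t p = s(a, b)} = mult t a * mult t b := by
  classical
  set A := Finset.univ.filter (fun i : Fin k => ‖t i‖ = a) with hA
  set B := Finset.univ.filter (fun i : Fin k => ‖t i‖ = b) with hB
  have hch : ∀ p : PairT k, (dnu t p = s(a, b)) ↔
      ((‖t p.1.1‖ = a ∧ ‖t p.1.2‖ = b) ∨ (‖t p.1.1‖ = b ∧ ‖t p.1.2‖ = a)) := by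
    intro p
    unfold dnu
    rw [Sym2.eq_iff]
  have hdisj : Disjoint (fun p : PairT k => ‖t p.1.1‖ = a ∧ ‖t p.1.2‖ = b)
      (fun p : PairT k => ‖t p.1.1‖ = b ∧ ‖t p.1.2‖ = a) := by
    rw [Pi.disjoint_iff]
    intro p
    simp only [Prop.disjoint_iff]
    intro h1
    exact hab ((h1.1.1.symm).trans h1.2.1)
  have e1 := Equiv.subtypeEquivRight hch
  have e2 := subtypeOrEquiv _ _ hdisj
  rw [Fintype.card_congr (e1.trans e2), Fintype.card_sum]
  have c1 : Fintype.card {p : PairT k // ‖t p.1.1‖ = a ∧ ‖t p.1.2‖ = b}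
      = ((A ×ˢ B).filter fun q => q.1 < q.2).card := by
    rw [Fintype.card_congr (Equiv.subtypeSubtypeEquivSubtypeInter
      (fun q : Fin k × Fin k => q.1 < q.2) (fun q => ‖t q.1‖ = a ∧ ‖t q.2‖ = b)),
      Fintype.card_subtype]
    congr 1
    ext q
    simp only [hA, hB, Finset.mem_filter, Finset.mem_product, Finset.mem_univ, true_and]
    tauto
  have c2 : Fintype.card {p : PairT k // ‖t p.1.1‖ = b ∧ ‖t p.1.2‖ = a}
      = ((B ×ˢ A).filter fun q => q.1 < q.2).card := by
    rw [Fintype.card_congr (Equiv.subtypeSubtypeEquivSubtypeInter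
      (fun q : Fin k × Fin k => q.1 < q.2) (fun q => ‖t q.1‖ = b ∧ ‖t q.2‖ = a)),
      Fintype.card_subtype]
    congr 1
    ext q
    simp only [hA, hB, Finset.mem_filter, Finset.mem_product, Finset.mem_univ, true_and]
    tauto
  rw [c1, c2]
  have hswap : ((B ×ˢ A).filter fun q => q.1 < q.2)
      = ((A ×ˢ B).filter fun q => ¬ q.1 < q.2).image Prod.swap := by
    ext q
    simp only [Finset.mem_image, Finset.mem_filter, Finset.mem_product]
    constructor
    · rintro ⟨⟨h1, h2⟩, h3⟩
      exact ⟨q.swap, ⟨⟨h2, h1⟩, not_lt.mpr (le_of_lt h3)⟩, Prod.swap_swap q⟩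
    · rintro ⟨p, ⟨⟨h1, h2⟩, h3⟩, rfl⟩
      refine ⟨⟨h2, h1⟩, ?_⟩
      have hne : p.1 ≠ p.2 := by
        intro e
        rw [hA, Finset.mem_filter] at h1
        rw [hB, Finset.mem_filter] at h2
        exact hab (h1.2.symm.trans (e ▸ h2.2))
      exact lt_of_le_of_ne (not_lt.mp h3) (Ne.symm hne)
  rw [hswap, Finset.card_image_of_injective _ Prod.swap_injective]
  have := Finset.card_filter_add_card_filter_not
    (s := A ×ˢ B) (p := fun q : Fin k × Fin k => q.1 < q.2)
  rw [Finset.card_product] at this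
  have hAm : A.card = mult t a := rfl
  have hBm : B.card = mult t b := rfl
  have hab2 : A.card * B.card = mult t a * mult t b := by rw [hAm, hBm]
  omega

lemma H_card {n k : ℕ} (t : Fin k → Euc n) :
    Fintype.card {σ : Equiv.Perm (Fin k) // (fun i => ‖t i‖) ∘ σ = fun i => ‖t i‖} =
      ∏ z ∈ norms t, (mult t z).factorial := by
  classical
  rw [DomMulAct.stabilizer_card' (fun i => ‖t i‖)]
  refine Finset.prod_congr rfl fun z _ => ?_
  rw [Fintype.card_subtype]
  rfl

lemma GG_card {n k : ℕ} (t : Fin k → Euc n) :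
    Fintype.card {g : Equiv.Perm (PairT k) // dnu t ∘ g = dnu t} =
      (∏ z ∈ (norms t).filter (fun z => 2 ≤ mult t z), ((mult t z).choose 2).factorial) *
      ∏ p ∈ ((norms t) ×ˢ (norms t)).filter (fun p => p.1 < p.2),
        (mult t p.1 * mult t p.2).factorial := by
  classical
  rw [DomMulAct.stabilizer_card' (dnu t)]
  set F : Sym2 ℝ → ℕ := fun w => (Fintype.card {p : PairT k // dnu t p = w}).factorial with hF
  set T2 := ((norms t) ×ˢ (norms t)).filter (fun p : ℝ × ℝ => p.1 ≤ p.2) with hT2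
  set W := T2.image (fun p : ℝ × ℝ => s(p.1, p.2)) with hW
  have hnmem : ∀ i : Fin k, ‖t i‖ ∈ norms t := fun i =>
    Finset.mem_image.mpr ⟨i, Finset.mem_univ i, rfl⟩
  have hsub : Finset.univ.image (dnu t) ⊆ W := by
    intro w hw
    rw [Finset.mem_image] at hw
    obtain ⟨p, _, rfl⟩ := hw
    rcases le_total (‖t p.1.1‖) (‖t p.1.2‖) with h | h
    · refine Finset.mem_image.mpr ⟨(‖t p.1.1‖, ‖t p.1.2‖), ?_, rfl⟩
      rw [hT2, Finset.mem_filter, Finset.mem_product]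
      exact ⟨⟨hnmem _, hnmem _⟩, h⟩
    · refine Finset.mem_image.mpr ⟨(‖t p.1.2‖, ‖t p.1.1‖), ?_, ?_⟩
      · rw [hT2, Finset.mem_filter, Finset.mem_product]
        exact ⟨⟨hnmem _, hnmem _⟩, h⟩
      · exact (Sym2.eq_swap).symm ▸ rfl
  have hprodW : ∏ w ∈ Finset.univ.image (dnu t), F w = ∏ w ∈ W, F w := by
    refine Finset.prod_subset hsub fun w _ hnw => ?_
    have hempty : Fintype.card {p : PairT k // dnu t p = w} = 0 := by
      rw [Fintype.card_eq_zero_iff]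
      exact ⟨fun p => hnw (Finset.mem_image.mpr ⟨p.1, Finset.mem_univ _, p.2⟩)⟩
    simp only [hF, hempty, Nat.factorial_zero]
  have hinjW : ∀ p ∈ T2, ∀ q ∈ T2, s(p.1, p.2) = s(q.1, q.2) → p = q := by
    rintro ⟨a, b⟩ hp ⟨c, d⟩ hq h
    rw [hT2, Finset.mem_filter] at hp hq
    dsimp only at h
    rw [Sym2.eq_iff] at h
    rcases h with ⟨h1, h2⟩ | ⟨h1, h2⟩
    · rw [h1, h2]
    · have h3 : a ≤ b := hp.2
      have h4 : c ≤ d := hq.2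
      have h5 : a = b := le_antisymm h3 (h2 ▸ h1 ▸ h4)
      have h6 : c = d := by rw [← h2, ← h5, h1]
      rw [h1, h2, h6]
  have hWT2 : ∏ w ∈ W, F w = ∏ p ∈ T2, F s(p.1, p.2) := by
    rw [hW]
    exact Finset.prod_image hinjW
  have hsplit : ∏ p ∈ T2, F s(p.1, p.2) =
      (∏ p ∈ T2.filter (fun p => p.1 = p.2), F s(p.1, p.2)) *
      ∏ p ∈ T2.filter (fun p => ¬ p.1 = p.2), F s(p.1, p.2) :=
    (Finset.prod_filter_mul_prod_filter_not T2 _ _).symm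
  have hdiagset : T2.filter (fun p => p.1 = p.2) = (norms t).image (fun z => (z, z)) := by
    ext ⟨x, y⟩
    rw [Finset.mem_filter, hT2, Finset.mem_filter, Finset.mem_product]
    simp only [Finset.mem_image, Prod.mk.injEq]
    constructor
    · rintro ⟨⟨⟨h1, h2⟩, h3⟩, h4⟩
      exact ⟨x, h1, rfl, h4.symm ▸ rfl⟩
    · rintro ⟨z, hz, rfl, rfl⟩
      exact ⟨⟨⟨hz, hz⟩, le_refl _⟩, rfl⟩
  have hdiag : ∏ p ∈ T2.filter (fun p => p.1 = p.2), F s(p.1, p.2) =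
      ∏ z ∈ norms t, ((mult t z).choose 2).factorial := by
    rw [hdiagset, Finset.prod_image (fun z _ z' _ h => (Prod.mk.injEq _ _ _ _ ▸ h).1)]
    refine Finset.prod_congr rfl fun z _ => ?_
    show F (s(z, z)) = _
    simp only [hF]
    rw [fiber_diag]
  have hdiag2 : ∏ z ∈ norms t, ((mult t z).choose 2).factorial =
      ∏ z ∈ (norms t).filter (fun z => 2 ≤ mult t z), ((mult t z).choose 2).factorial := by
    refine (Finset.prod_subset (Finset.filter_subset _ _) fun z hzm hz => ?_).symm
    rw [Finset.mem_filter, not_and] at hz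
    have hlt : mult t z < 2 := not_le.mp (hz hzm)
    rw [Nat.choose_eq_zero_of_lt hlt, Nat.factorial_zero]
  have hstrictset : T2.filter (fun p => ¬ p.1 = p.2) =
      ((norms t) ×ˢ (norms t)).filter (fun p => p.1 < p.2) := by
    ext ⟨x, y⟩
    rw [Finset.mem_filter, hT2, Finset.mem_filter, Finset.mem_filter]
    constructor
    · rintro ⟨⟨h1, h2⟩, h3⟩
      exact ⟨h1, lt_of_le_of_ne h2 h3⟩
    · rintro ⟨h1, h2⟩
      exact ⟨⟨h1, le_of_lt h2⟩, ne_of_lt h2⟩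
  have hstrict : ∏ p ∈ T2.filter (fun p => ¬ p.1 = p.2), F s(p.1, p.2) =
      ∏ p ∈ ((norms t) ×ˢ (norms t)).filter (fun p => p.1 < p.2),
        (mult t p.1 * mult t p.2).factorial := by
    rw [hstrictset]
    refine Finset.prod_congr rfl fun p hp => ?_
    rw [Finset.mem_filter] at hp
    show F (s(p.1, p.2)) = _
    simp only [hF]
    rw [fiber_offdiag t p.1 p.2 (ne_of_lt hp.2)]
  rw [hprodW, hWT2, hsplit, hdiag, hdiag2, hstrict]

/-- Theorem: for a collision-free tuple `t` of `k ≥ 3` pairwise distinct points, the number of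
equivalence classes (under orthogonal transformation combined with relabeling) of tuples of
pairwise distinct points with the same second-moment data as `t` is finite and bounded above by
`(∏_{p : r_p ≥ 2} (r_p choose 2)!) · (∏_{a < b ≤ q} (r_a r_b)!) / (∏_p r_p!)`. -/
theorem card_classes_le_classBound {n k : ℕ} (hk : 3 ≤ k)
    (t : Fin k → EuclideanSpace ℝ (Fin n))
    (hinj : Function.Injective t) (hcf : IsCollisionFree t) :
    Finite (Quot (EquivRel {s : Fin k → EuclideanSpace ℝ (Fin n) |
      Function.Injective s ∧ SameSecondMoment s t})) ∧
    ((Nat.card (Quot (EquivRel {s : Fin k → EuclideanSpace ℝ (Fin n) |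
      Function.Injective s ∧ SameSecondMoment s t})) : ℚ) ≤ classBound t) := by
  obtain ⟨hfin, hle⟩ := finite_and_card_mul_le hk t hinj hcf
  refine ⟨hfin, ?_⟩
  rw [H_card, GG_card] at hle
  rw [classBound]
  have hpos : (0 : ℚ) < ∏ z ∈ norms t, ((mult t z).factorial : ℚ) :=
    Finset.prod_pos fun z _ => by exact_mod_cast Nat.factorial_pos _
  rw [le_div_iff₀ hpos]
  exact_mod_cast hle
end

section
/- For all real numbers a and b, the two 6-tuples P = (0, a, b − 2a, 2b − 2a, 2b, 3b − a) and Q = (0, a, 2a + b, a + 2b, 2b − a, 3b − a) have equal difference multisets: the multiset {P i − P j : i ≠ j, i, j ∈ Fin 6} equals the multiset {Q i − Q j : i ≠ j, i, j ∈ Fin 6}. In other words, P and Q are homometric sets on the real line for every choice of parameters a and b. -/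
private lemma my_cons_val_five {α : Type*} {m : ℕ} (x : α) (u : Fin (m+5) → α) :
    Matrix.vecCons x u 5 =
      Matrix.vecHead (Matrix.vecTail (Matrix.vecTail (Matrix.vecTail (Matrix.vecTail u)))) := rfl

private def hv1 : Fin 6 → ℤ × ℤ := ![(0,0),(1,0),(-2,1),(-2,2),(0,2),(-1,3)]
private def hv2 : Fin 6 → ℤ × ℤ := ![(0,0),(1,0),(2,1),(1,2),(-1,2),(-1,3)]

private theorem hkey :
    ((Finset.univ : Finset (Fin 6)).offDiag.val.map (fun p => hv1 p.1 - hv1 p.2)) =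
    ((Finset.univ : Finset (Fin 6)).offDiag.val.map (fun p => hv2 p.1 - hv2 p.2)) := by
  decide

/-- The 6-tuples `P = (0, a, b − 2a, 2b − 2a, 2b, 3b − a)` and
`Q = (0, a, 2a + b, a + 2b, 2b − a, 3b − a)` have equal difference multisets
(over all ordered pairs of distinct indices) for every choice of the real
parameters `a` and `b`; i.e., `P` and `Q` are homometric on the real line. -/
theorem homometric_families (a b : ℝ) :
    (((Finset.univ : Finset (Fin 6)).offDiag.val.map
      (fun p => ![0, a, b - 2*a, 2*b - 2*a, 2*b, 3*b - a] p.1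
               - ![0, a, b - 2*a, 2*b - 2*a, 2*b, 3*b - a] p.2)) : Multiset ℝ) =
    ((Finset.univ : Finset (Fin 6)).offDiag.val.map
      (fun p => ![0, a, 2*a + b, a + 2*b, 2*b - a, 3*b - a] p.1
               - ![0, a, 2*a + b, a + 2*b, 2*b - a, 3*b - a] p.2)) := by
  set f : ℤ × ℤ → ℝ := fun c => (c.1 : ℝ) * a + (c.2 : ℝ) * b with hf
  have h1 : ∀ i : Fin 6, f (hv1 i) = ![0, a, b - 2*a, 2*b - 2*a, 2*b, 3*b - a] i := by
    intro i; fin_cases i <;> simp [hf, hv1, my_cons_val_five] <;> ring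
  have h2 : ∀ i : Fin 6, f (hv2 i) = ![0, a, 2*a + b, a + 2*b, 2*b - a, 3*b - a] i := by
    intro i; fin_cases i <;> simp [hf, hv2, my_cons_val_five] <;> ring
  have hfsub : ∀ c d : ℤ × ℤ, f (c - d) = f c - f d := by
    intro c d; simp [hf, Prod.fst_sub, Prod.snd_sub]; push_cast; ring
  calc ((Finset.univ : Finset (Fin 6)).offDiag.val.map
      (fun p => ![0, a, b - 2*a, 2*b - 2*a, 2*b, 3*b - a] p.1
               - ![0, a, b - 2*a, 2*b - 2*a, 2*b, 3*b - a] p.2))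
      = ((Finset.univ : Finset (Fin 6)).offDiag.val.map (fun p => hv1 p.1 - hv1 p.2)).map f := by
        rw [Multiset.map_map]
        exact (Multiset.map_congr rfl (fun p _ => by
          simp only [Function.comp, hfsub, h1])).symm
    _ = ((Finset.univ : Finset (Fin 6)).offDiag.val.map (fun p => hv2 p.1 - hv2 p.2)).map f := by
        rw [hkey]
    _ = _ := by
        rw [Multiset.map_map]
        exact Multiset.map_congr rfl (fun p _ => by
          simp only [Function.comp, hfsub, h2])
end
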